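/- Let n, m ≥ 1, and let f : ℝⁿ → ℝⁿ and G : ℝⁿ → ℝ^{n×m} have componentwise Lipschitz bounds L_{f,k}, L_{G,k,l} with respect to the Euclidean norm ‖·‖₂ on ℝⁿ. Let V ⊆ ℝᵐ and V_l ≥ 0 with |u_l| ≤ V_l for every u ∈ V, and let U_l ≥ V_l for all l. Let R = ∏_{k=1}^n [r_lo_k, r_hi_k] with r_lo ≤ r_hi, and M ≥ 0 with |f_k(x) + Σ_l G_{k,l}(x)·u_l| ≤ M for all x ∈ R, u ∈ V, k. Define β = sqrt( Σ_k ( L_{f,k} + Σ_l L_{G,k,l}·V_l )² ) and β_∞ = sqrt( Σ_k ( L_{f,k} + Σ_l L_{G,k,l}·U_l )² ). If Δt > 0 satisfies √n·β_∞·Δt < 1, then with μ = Δt·M / (1 − √n·β·Δt) and S = ∏_k [r_lo_k − μ, r_hi_k + μ], for every x₀ ∈ R, s ∈ S, u ∈ V and τ ∈ [0, Δt]: x₀ + τ·(f(s) + G(s)·u) ∈ S. -/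

import Mathlib

/-! Project the point `s` of the enlarged box `S` onto the box `R`: the projection `x` is within
`μ` of `s` in every coordinate, hence within `√n μ` in the Euclidean norm, so the Lipschitz bounds
give `|h_k(s, u)| ≤ M + β √n μ`. The radius `μ` is exactly the fixed point of
`μ ↦ Δt (M + √n β μ)`, so a step of length `τ ≤ Δt` from `x₀ ∈ R` moves each coordinate by at
most `μ`. The condition `√n β Δt < 1` making `μ` well defined follows from `√n β_∞ Δt < 1`,
as Lipschitz constants are nonnegative and `V_l ≤ U_l`. -/

open Finset

section

variable {ι : Type*} [Fintype ι]

lemma nonneg_of_abs_sub_le_mul_sqrt_sum_sq [Nonempty ι] {g : (ι → ℝ) → ℝ} {L : ℝ}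
    (h : ∀ x y : ι → ℝ, |g x - g y| ≤ L * √(∑ j, (x j - y j) ^ 2)) : 0 ≤ L := by
  have hL := (abs_nonneg _).trans (h 0 1)
  refine nonneg_of_mul_nonneg_left hL (Real.sqrt_pos.mpr ?_)
  simp [Fintype.card_pos]

lemma sqrt_sum_sq_sub_le_of_abs_sub_le {x y : ι → ℝ} {ε : ℝ} (hε : 0 ≤ ε)
    (h : ∀ j, |x j - y j| ≤ ε) : √(∑ j, (x j - y j) ^ 2) ≤ √(Fintype.card ι) * ε := by
  have hsum : ∑ j, (x j - y j) ^ 2 ≤ Fintype.card ι * ε ^ 2 := by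
    calc ∑ j, (x j - y j) ^ 2 ≤ ∑ _j : ι, ε ^ 2 :=
          sum_le_sum fun j _ => sq_le_sq' (abs_le.mp (h j)).1 (abs_le.mp (h j)).2
      _ = Fintype.card ι * ε ^ 2 := by simp
  calc √(∑ j, (x j - y j) ^ 2) ≤ √(Fintype.card ι * ε ^ 2) := Real.sqrt_le_sqrt hsum
    _ = √(Fintype.card ι) * ε := by rw [Real.sqrt_mul (by positivity), Real.sqrt_sq hε]

lemma le_sqrt_sum_sq (c : ι → ℝ) (k : ι) : c k ≤ √(∑ j, c j ^ 2) :=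
  (le_abs_self _).trans <| Real.abs_le_sqrt <|
    single_le_sum (f := fun j => c j ^ 2) (fun _ _ => sq_nonneg _) (mem_univ k)

lemma abs_add_sum_mul_sub_add_sum_mul_le {a a' La d : ℝ} {g g' Lg u b : ι → ℝ}
    (ha : |a - a'| ≤ La * d) (hg : ∀ l, |g l - g' l| ≤ Lg l * d) (hu : ∀ l, |u l| ≤ b l) :
    |(a + ∑ l, g l * u l) - (a' + ∑ l, g' l * u l)| ≤ (La + ∑ l, Lg l * b l) * d := by
  have hterm : ∀ l, |(g l - g' l) * u l| ≤ Lg l * b l * d := fun l => by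
    rw [abs_mul]
    calc |g l - g' l| * |u l| ≤ Lg l * d * b l :=
          mul_le_mul (hg l) (hu l) (abs_nonneg _) ((abs_nonneg _).trans (hg l))
      _ = Lg l * b l * d := by ring
  have hsum : |∑ l, (g l - g' l) * u l| ≤ (∑ l, Lg l * b l) * d := by
    rw [sum_mul]
    exact (abs_sum_le_sum_abs _ _).trans (sum_le_sum fun l _ => hterm l)
  have hsplit : (a + ∑ l, g l * u l) - (a' + ∑ l, g' l * u l) =
      (a - a') + ∑ l, (g l - g' l) * u l := by
    simp only [sub_mul, sum_sub_distrib]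
    ring
  rw [hsplit]
  linarith [abs_add_le (a - a') (∑ l, (g l - g' l) * u l)]

end

lemma exists_mem_Icc_abs_sub_le {a b s μ : ℝ} (hab : a ≤ b) (hμ : 0 ≤ μ)
    (hs : s ∈ Set.Icc (a - μ) (b + μ)) : ∃ x ∈ Set.Icc a b, |s - x| ≤ μ := by
  obtain ⟨hs₁, hs₂⟩ := hs
  refine ⟨max a (min s b), ⟨le_max_left _ _, max_le hab (min_le_right _ _)⟩, abs_le.mpr ?_⟩
  rcases max_cases a (min s b) with ⟨h₁, h₂⟩ | ⟨h₁, h₂⟩ <;>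
    rcases min_cases s b with ⟨h₃, h₄⟩ | ⟨h₃, h₄⟩ <;> constructor <;> linarith

lemma mul_add_mul_eq_self_of_eq_div {Δt M c μ : ℝ} (hc : c * Δt < 1)
    (hμ : μ = Δt * M / (1 - c * Δt)) : Δt * (M + c * μ) = μ := by
  have hμ' : μ * (1 - c * Δt) = Δt * M := hμ ▸ div_mul_cancel₀ _ (sub_pos.mpr hc).ne'
  linear_combination -hμ'

theorem explicit_rough_enclosure_global_bound_general (n m : ℕ)
    (f : (Fin n → ℝ) → Fin n → ℝ) (G : (Fin n → ℝ) → Fin n → Fin m → ℝ)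
    (Lf : Fin n → ℝ) (LG : Fin n → Fin m → ℝ)
    (hLipf : ∀ x y : Fin n → ℝ, ∀ k,
      |f x k - f y k| ≤ Lf k * Real.sqrt (∑ j, (x j - y j) ^ 2))
    (hLipG : ∀ x y : Fin n → ℝ, ∀ k l,
      |G x k l - G y k l| ≤ LG k l * Real.sqrt (∑ j, (x j - y j) ^ 2))
    (V : Set (Fin m → ℝ)) (Vb : Fin m → ℝ)
    (hVbnd : ∀ u ∈ V, ∀ l, |u l| ≤ Vb l)
    (Ub : Fin m → ℝ) (hUb : ∀ l, Vb l ≤ Ub l)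
    (rlo rhi : Fin n → ℝ)
    (M : ℝ)
    (hMb : ∀ x : Fin n → ℝ, (∀ k, rlo k ≤ x k ∧ x k ≤ rhi k) → ∀ u ∈ V, ∀ k,
      |f x k + ∑ l, G x k l * u l| ≤ M)
    (β βinf : ℝ)
    (hβdef : β = Real.sqrt (∑ k, (Lf k + ∑ l, LG k l * Vb l) ^ 2))
    (hβinfdef : βinf = Real.sqrt (∑ k, (Lf k + ∑ l, LG k l * Ub l) ^ 2))
    (Δt : ℝ) (hstep : Real.sqrt n * βinf * Δt < 1)
    (μ : ℝ) (hμ : μ = Δt * M / (1 - Real.sqrt n * β * Δt)) :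
    ∀ x₀ : Fin n → ℝ, (∀ k, rlo k ≤ x₀ k ∧ x₀ k ≤ rhi k) →
    ∀ s : Fin n → ℝ, (∀ k, rlo k - μ ≤ s k ∧ s k ≤ rhi k + μ) →
    ∀ u ∈ V, ∀ τ ∈ Set.Icc (0 : ℝ) Δt, ∀ k,
      rlo k - μ ≤ x₀ k + τ * (f s k + ∑ l, G s k l * u l) ∧
      x₀ k + τ * (f s k + ∑ l, G s k l * u l) ≤ rhi k + μ := by
  intro x₀ hx₀ s hs u hu τ ⟨hτ₀, hτΔt⟩ k
  have : Nonempty (Fin n) := ⟨k⟩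
  have hLG j l : 0 ≤ LG j l := nonneg_of_abs_sub_le_mul_sqrt_sum_sq (hLipG · · j l)
  have hc j : 0 ≤ Lf j + ∑ l, LG j l * Vb l :=
    add_nonneg (nonneg_of_abs_sub_le_mul_sqrt_sum_sq (hLipf · · j))
      (sum_nonneg fun l _ => mul_nonneg (hLG j l) ((abs_nonneg _).trans (hVbnd u hu l)))
  have hβ : β ≤ βinf := by
    rw [hβdef, hβinfdef]
    refine Real.sqrt_le_sqrt (sum_le_sum fun j _ => pow_le_pow_left₀ (hc j) ?_ 2)
    gcongr with l
    exacts [hLG j l, hUb l]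
  have hΔt : 0 ≤ Δt := hτ₀.trans hτΔt
  have hstepβ : √n * β * Δt < 1 := lt_of_le_of_lt (by gcongr) hstep
  have hμ₀ : 0 ≤ μ := hμ ▸ div_nonneg (mul_nonneg hΔt ((abs_nonneg _).trans (hMb x₀ hx₀ u hu k)))
    (sub_pos.mpr hstepβ).le
  choose x hxR hsx using fun j =>
    exists_mem_Icc_abs_sub_le ((hx₀ j).1.trans (hx₀ j).2) hμ₀ (hs j)
  have hdist : √(∑ j, (s j - x j) ^ 2) ≤ √n * μ := by
    simpa using sqrt_sum_sq_sub_le_of_abs_sub_le hμ₀ hsx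
  have hck : Lf k + ∑ l, LG k l * Vb l ≤ β :=
    hβdef ▸ le_sqrt_sum_sq (fun j => Lf j + ∑ l, LG j l * Vb l) k
  have hvf : |f s k + ∑ l, G s k l * u l| ≤ M + √n * β * μ := by
    have hLip := abs_add_sum_mul_sub_add_sum_mul_le (hLipf s x k) (hLipG s x k) (hVbnd u hu)
    have : (Lf k + ∑ l, LG k l * Vb l) * √(∑ j, (s j - x j) ^ 2) ≤ √n * β * μ := by
      rw [mul_comm √n, mul_assoc]
      gcongr
      exact hβdef ▸ Real.sqrt_nonneg _
    linarith [hMb x hxR u hu k, abs_sub_abs_le_abs_sub (f s k + ∑ l, G s k l * u l)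
      (f x k + ∑ l, G x k l * u l)]
  have hmove : |τ * (f s k + ∑ l, G s k l * u l)| ≤ μ := by
    rw [abs_mul, abs_of_nonneg hτ₀, ← mul_add_mul_eq_self_of_eq_div hstepβ hμ]
    exact mul_le_mul hτΔt hvf (abs_nonneg _) hΔt
  obtain ⟨hlo, hhi⟩ := abs_le.mp hmove
  exact ⟨by linarith [(hx₀ k).1], by linarith [(hx₀ k).2]⟩

theorem explicit_rough_enclosure_global_bound (n m : ℕ) (hn : 1 ≤ n) (hm : 1 ≤ m)
    (f : (Fin n → ℝ) → Fin n → ℝ) (G : (Fin n → ℝ) → Fin n → Fin m → ℝ)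
    (Lf : Fin n → ℝ) (LG : Fin n → Fin m → ℝ)
    (hLipf : ∀ x y : Fin n → ℝ, ∀ k,
      |f x k - f y k| ≤ Lf k * Real.sqrt (∑ j, (x j - y j) ^ 2))
    (hLipG : ∀ x y : Fin n → ℝ, ∀ k l,
      |G x k l - G y k l| ≤ LG k l * Real.sqrt (∑ j, (x j - y j) ^ 2))
    (V : Set (Fin m → ℝ)) (Vb : Fin m → ℝ) (hVb : ∀ l, 0 ≤ Vb l)
    (hVbnd : ∀ u ∈ V, ∀ l, |u l| ≤ Vb l)
    (Ub : Fin m → ℝ) (hUb : ∀ l, Vb l ≤ Ub l)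
    (rlo rhi : Fin n → ℝ) (hr : ∀ k, rlo k ≤ rhi k)
    (M : ℝ) (hM : 0 ≤ M)
    (hMb : ∀ x : Fin n → ℝ, (∀ k, rlo k ≤ x k ∧ x k ≤ rhi k) → ∀ u ∈ V, ∀ k,
      |f x k + ∑ l, G x k l * u l| ≤ M)
    (β βinf : ℝ)
    (hβdef : β = Real.sqrt (∑ k, (Lf k + ∑ l, LG k l * Vb l) ^ 2))
    (hβinfdef : βinf = Real.sqrt (∑ k, (Lf k + ∑ l, LG k l * Ub l) ^ 2))
    (Δt : ℝ) (hΔt : 0 < Δt) (hstep : Real.sqrt n * βinf * Δt < 1)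
    (μ : ℝ) (hμ : μ = Δt * M / (1 - Real.sqrt n * β * Δt)) :
    ∀ x₀ : Fin n → ℝ, (∀ k, rlo k ≤ x₀ k ∧ x₀ k ≤ rhi k) →
    ∀ s : Fin n → ℝ, (∀ k, rlo k - μ ≤ s k ∧ s k ≤ rhi k + μ) →
    ∀ u ∈ V, ∀ τ ∈ Set.Icc (0 : ℝ) Δt, ∀ k,
      rlo k - μ ≤ x₀ k + τ * (f s k + ∑ l, G s k l * u l) ∧
      x₀ k + τ * (f s k + ∑ l, G s k l * u l) ≤ rhi k + μ :=
  explicit_rough_enclosure_global_bound_general n m f G Lf LG hLipf hLipG V Vb hVbnd Ub hUb rlo rhi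
    M hMb β βinf hβdef hβinfdef Δt hstep μ hμ
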